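/- arXiv:1302.0058 — 5 statements merged into one kernel-verified Lean document; each statement's English description precedes it below -/
import Mathlib

section
/- If w_n = μ(⋃_{k=0}^{n-1} T^{-k}A) is the wandering rate of a set A for a conservative ergodic measure preserving map, then w_n ~ μ({φ < n}) as n → ∞, i.e., the ratio w_n / μ({x : φ(x) < n}) tends to 1 (assuming w_n → ∞). -/
/-!
Poincaré recurrence puts almost every point of `A` into `S = {x | ∃ n ≥ 1, Tⁿ x ∈ A}`; since
`S = T⁻¹(A ∪ S)`, the set `S` is then almost invariant, so by ergodicity it has full measure.
Hence `φ` is an honest first return time almost everywhere and `{φ < n}` agrees a.e. with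
`⋃_{1 ≤ k < n} T⁻ᵏ A`. That union sits inside `⋃_{0 ≤ k < n} T⁻ᵏ A` and misses at most `A`, so
`w_n` and `μ {φ < n}` differ by at most `μ A < ∞`, which is negligible because `w_n → ∞`.
-/

open MeasureTheory Set Filter Asymptotics Topology

theorem tendsto_div_nhds_one_of_sub_isBigO_one {α 𝕜 : Type*} [NormedField 𝕜] {l : Filter α}
    {u v : α → 𝕜} (hu : Tendsto (fun x => ‖u x‖) l atTop)
    (huv : (u - v) =O[l] fun _ => (1 : 𝕜)) : Tendsto (u / v) l (𝓝 1) := by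
  have hvu : v ~[l] u := by
    have : (v - u) =O[l] fun _ => (1 : 𝕜) := by simpa using huv.neg_left
    exact this.trans_isLittleO ((isLittleO_one_left_iff 𝕜).mpr hu)
  have hv_ne : ∀ᶠ x in l, v x ≠ 0 := by
    filter_upwards [(hvu.isBigO_symm.trans_tendsto_norm_atTop hu).eventually_gt_atTop 0]
      with x hx
    exact norm_pos_iff.mp hx
  exact (isEquivalent_iff_tendsto_one hv_ne).mp hvu.symm

theorem abs_measureReal_sub_le_of_subset_union {E : Type*} [MeasurableSpace E]
    {μ : Measure E} {r s t : Set E} (hst : s ⊆ t) (htr : t ⊆ r ∪ s) (hr : μ r ≠ ⊤)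
    (ht : μ t ≠ ⊤) : |μ.real t - μ.real s| ≤ μ.real r := by
  have hs : μ s ≠ ⊤ := measure_ne_top_of_subset hst ht
  have hle : μ.real s ≤ μ.real t := measureReal_mono hst ht
  have hge : μ.real t ≤ μ.real r + μ.real s :=
    (measureReal_mono htr (measure_union_ne_top hr hs)).trans (measureReal_union_le r s)
  rw [abs_of_nonneg (sub_nonneg.mpr hle)]
  linarith

theorem biUnion_range_subset_union_biUnion_Ico {E : Type*} (s : ℕ → Set E) (n : ℕ) :
    ⋃ k ∈ Finset.range n, s k ⊆ s 0 ∪ ⋃ k ∈ Finset.Ico 1 n, s k := by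
  intro x
  simp only [mem_iUnion, mem_union, Finset.mem_range, Finset.mem_Ico, exists_prop]
  rintro ⟨k, hk, hx⟩
  rcases k.eq_zero_or_pos with rfl | hk0
  · exact Or.inl hx
  · exact Or.inr ⟨k, ⟨hk0, hk⟩, hx⟩

theorem preimage_union_setOf_exists_iterate_succ_mem {E : Type*} (T : E → E) (A : Set E) :
    T ⁻¹' (A ∪ {x | ∃ n, T^[n + 1] x ∈ A}) = {x | ∃ n, T^[n + 1] x ∈ A} := by
  ext x
  simp only [mem_preimage, mem_union, mem_ofPred_eq, Function.iterate_succ_apply]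
  constructor
  · rintro (h | ⟨n, hn⟩)
    · exact ⟨0, h⟩
    · exact ⟨n + 1, hn⟩
  · rintro ⟨_ | n, hn⟩
    · exact Or.inl hn
    · exact Or.inr ⟨n, by simpa [Function.iterate_succ_apply] using hn⟩

section Recurrence

variable {E : Type*} [MeasurableSpace E] {μ : Measure E} {T : E → E} {A : Set E}

theorem Ergodic.ae_exists_iterate_succ_mem (herg : Ergodic T μ) (hcons : Conservative T μ)
    (hA : MeasurableSet A) (hA0 : μ A ≠ 0) : ∀ᵐ x ∂μ, ∃ n, T^[n + 1] x ∈ A := by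
  set S := {x | ∃ n, T^[n + 1] x ∈ A}
  have hS : MeasurableSet S := by
    simp only [S, ofPred_exists]
    exact .iUnion fun n => herg.measurable.iterate (n + 1) hA
  have hAS : μ (A \ S) = 0 := by
    refine ae_le_set.mp ?_
    filter_upwards [hcons.ae_mem_imp_frequently_image_mem hA.nullMeasurableSet] with x hx hxA
    obtain ⟨n, hnA, hn⟩ := ((hx hxA).and_eventually (eventually_ge_atTop 1)).exists
    exact ⟨n - 1, by rwa [Nat.sub_add_cancel hn]⟩
  have hinv : S =ᵐ[μ] T ⁻¹' S := by
    have := herg.quasiMeasurePreserving.preimage_ae_eq (union_ae_eq_right.mpr hAS)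
    rwa [preimage_union_setOf_exists_iterate_succ_mem] at this
  rcases herg.quasiErgodic.ae_empty_or_univ₀ hS.nullMeasurableSet hinv.symm with h | h
  · refine absurd (measure_mono_null (fun _ hx => ⟨0, hx⟩ : T ⁻¹' A ⊆ S) (ae_eq_empty.mp h)) ?_
    rwa [herg.measure_preimage hA.nullMeasurableSet]
  · exact ae_eq_univ.mp h

theorem setOf_sInf_iterate_mem_lt_ae_eq (h : ∀ᵐ x ∂μ, ∃ n, T^[n + 1] x ∈ A) (N : ℕ) :
    {x | sInf {n | 1 ≤ n ∧ T^[n] x ∈ A} < N} =ᵐ[μ] ⋃ k ∈ Finset.Ico 1 N, T^[k] ⁻¹' A := by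
  filter_upwards [h] with x ⟨n, hn⟩
  refine propext ?_
  change sInf _ < N ↔ x ∈ ⋃ k ∈ Finset.Ico 1 N, T^[k] ⁻¹' A
  have hne : {m | 1 ≤ m ∧ T^[m] x ∈ A}.Nonempty := ⟨n + 1, by omega, hn⟩
  rw [csInf_lt_iff (OrderBot.bddBelow _) hne]
  simp only [mem_iUnion, Finset.mem_Ico, mem_preimage, mem_ofPred_eq, exists_prop]
  exact ⟨fun ⟨k, ⟨h1, hk⟩, h2⟩ => ⟨k, ⟨h1, h2⟩, hk⟩, fun ⟨k, ⟨h1, h2⟩, hk⟩ => ⟨k, ⟨h1, hk⟩, h2⟩⟩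

end Recurrence

theorem stmt2_general {E : Type*} [MeasurableSpace E] (μ : Measure E) (T : E → E)
    (hcons : Conservative T μ) (herg : Ergodic T μ)
    (A : Set E) (hA : MeasurableSet A) (hA0 : 0 < μ A) (hAfin : μ A < ⊤)
    (φ : E → ℕ) (hφ : ∀ x, φ x = sInf {n : ℕ | 1 ≤ n ∧ T^[n] x ∈ A})
    (w : ℕ → ℝ) (hw : ∀ n, w n = (μ (⋃ k ∈ Finset.range n, (T^[k]) ⁻¹' A)).toReal)
    (hw_top : Tendsto w atTop atTop) :
    Tendsto (fun n : ℕ => w n / (μ {x | φ x < n}).toReal) atTop (nhds 1) := by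
  have hfirst (n : ℕ) : μ {x | φ x < n} = μ (⋃ k ∈ Finset.Ico 1 n, T^[k] ⁻¹' A) := by
    simp only [hφ]
    exact measure_congr <|
      setOf_sInf_iterate_mem_lt_ae_eq (herg.ae_exists_iterate_succ_mem hcons hA hA0.ne') n
  simp_rw [hfirst]
  refine tendsto_div_nhds_one_of_sub_isBigO_one (tendsto_norm_atTop_atTop.comp hw_top) ?_
  refine .of_bound (μ A).toReal ?_
  filter_upwards [hw_top.eventually_gt_atTop 0] with n hn
  rw [hw n] at hn
  rw [Pi.sub_apply, hw n, norm_one, mul_one, Real.norm_eq_abs]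
  have hU := biUnion_range_subset_union_biUnion_Ico (fun k => T^[k] ⁻¹' A) n
  rw [Function.iterate_zero, preimage_id] at hU
  exact abs_measureReal_sub_le_of_subset_union
    (biUnion_subset_biUnion_left fun k hk => Finset.mem_range.mpr (Finset.mem_Ico.mp hk).2) hU hAfin.ne
    (ENNReal.toReal_pos_iff.mp hn).2.ne

/-- If `w_n = μ(⋃_{k=0}^{n-1} T^{-k} A)` is the wandering rate of a set `A` for a
conservative ergodic measure preserving map and `w_n → ∞`, then
`w_n / μ({φ < n}) → 1` as `n → ∞`. -/
theorem stmt2 {E : Type*} [MeasurableSpace E] (μ : Measure E) [SigmaFinite μ]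
    (T : E → E) (hTmeas : Measurable T) (hT : MeasurePreserving T μ μ)
    (hcons : Conservative T μ) (herg : Ergodic T μ) (hinf : μ Set.univ = ⊤)
    (A : Set E) (hA : MeasurableSet A) (hA0 : 0 < μ A) (hAfin : μ A < ⊤)
    (φ : E → ℕ) (hφ : ∀ x, φ x = sInf {n : ℕ | 1 ≤ n ∧ T^[n] x ∈ A})
    (w : ℕ → ℝ) (hw : ∀ n, w n = (μ (⋃ k ∈ Finset.range n, (T^[k]) ⁻¹' A)).toReal)
    (hw_top : Tendsto w atTop atTop) :
    Tendsto (fun n : ℕ => w n / (μ {x | φ x < n}).toReal) atTop (nhds 1) :=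
  stmt2_general μ T hcons herg A hA hA0 hAfin φ hφ w hw hw_top
end

section
/- The moment sequence η_r = r!·Γ(2−β)/Γ(rβ+2−β) of M_β(1−V_β) satisfies the Carleman condition Σ_{k=1}^∞ η_{2k}^{−1/(2k)} = ∞, so the law of M_β(1−V_β) is uniquely determined by its moments. -/
/-!
Since `Γ(rβ + 2 - β) ≥ Γ(2) = 1` for `r ≥ 1`, the moments grow at most like
`η_r ≤ Γ(2-β) r! ≤ Γ(2-β) r^r`. Hence `η_{2k}^{-1/(2k)} ≥ c / (2k)` for a constant
`c > 0`, and the series diverges by comparison with the harmonic series.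
-/

open Real

lemma Real.one_le_Gamma_of_two_le {x : ℝ} (hx : 2 ≤ x) : 1 ≤ Gamma x := by
  simpa [Gamma_two] using Gamma_strictMonoOn_Ici.monotoneOn (by simp) (by simpa using hx) hx

lemma Real.min_one_inv_le_rpow_neg_inv {C x : ℝ} (hC : 0 < C) (hx : 1 ≤ x) :
    min 1 C⁻¹ ≤ C ^ (-1 / x) := by
  have hexp : -1 / x ≤ 0 := div_nonpos_of_nonpos_of_nonneg (by norm_num) (by linarith)
  rcases le_or_gt 1 C with hC1 | hC1
  · calc min 1 C⁻¹ ≤ C⁻¹ := min_le_right _ _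
      _ = C ^ (-1 : ℝ) := (rpow_neg_one C).symm
      _ ≤ C ^ (-1 / x) := by
        refine rpow_le_rpow_of_exponent_le hC1 ?_
        rw [le_div_iff₀ (by linarith)]
        linarith
  · exact (min_le_left _ _).trans (one_le_rpow_of_pos_of_le_one_of_nonpos hC hC1.le hexp)

lemma Real.min_one_inv_div_le_rpow_of_le_mul_pow_self {a C : ℝ} {n : ℕ} (hC : 0 < C)
    (hn : 1 ≤ n) (ha : 0 < a) (haC : a ≤ C * (n : ℝ) ^ n) :
    min 1 C⁻¹ / n ≤ a ^ (-1 / (n : ℝ)) := by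
  have hn' : (1 : ℝ) ≤ n := by exact_mod_cast hn
  have hexp : -1 / (n : ℝ) ≤ 0 := div_nonpos_of_nonpos_of_nonneg (by norm_num) (by linarith)
  have hpow : ((n : ℝ) ^ n) ^ (-1 / (n : ℝ)) = (n : ℝ)⁻¹ := by
    rw [← rpow_natCast, ← rpow_mul (by linarith), mul_div_cancel₀ _ (by linarith),
      rpow_neg_one]
  calc min 1 C⁻¹ / n ≤ C ^ (-1 / (n : ℝ)) * (n : ℝ)⁻¹ := by
        rw [div_eq_mul_inv]
        gcongr
        exact min_one_inv_le_rpow_neg_inv hC hn'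
    _ = (C * (n : ℝ) ^ n) ^ (-1 / (n : ℝ)) := by rw [mul_rpow hC.le (by positivity), hpow]
    _ ≤ a ^ (-1 / (n : ℝ)) := rpow_le_rpow_of_nonpos ha haC hexp

lemma Real.not_summable_div_two_mul_succ {c : ℝ} (hc : 0 < c) :
    ¬ Summable (fun k : ℕ => c / (2 * ((k : ℝ) + 1))) := by
  intro h
  refine not_summable_one_div_natCast ((summable_nat_add_iff 1).mp ?_)
  have hrw : (fun k : ℕ => 1 / ((k + 1 : ℕ) : ℝ)) =
      fun k : ℕ => 2 / c * (c / (2 * ((k : ℝ) + 1))) := by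
    funext k
    push_cast
    field_simp
  exact hrw ▸ h.mul_left _

/-- Carleman's condition holds for an even moment sequence of growth at most `C n^n`. -/
theorem Real.not_summable_rpow_of_le_mul_pow_self {a : ℕ → ℝ} {C : ℝ} (hC : 0 < C)
    (ha : ∀ n, 1 ≤ n → 0 < a n) (haC : ∀ n, 1 ≤ n → a n ≤ C * (n : ℝ) ^ n) :
    ¬ Summable (fun k : ℕ => a (2 * (k + 1)) ^ (-(1 : ℝ) / (2 * ((k : ℝ) + 1)))) := by
  intro h
  refine not_summable_div_two_mul_succ (lt_min one_pos (inv_pos.mpr hC))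
    (h.of_nonneg_of_le (fun k => by positivity) fun k => ?_)
  have hn : 1 ≤ 2 * (k + 1) := by omega
  simpa using min_one_inv_div_le_rpow_of_le_mul_pow_self hC hn (ha _ hn) (haC _ hn)

section Moments

variable {β : ℝ} {r : ℕ}

lemma Real.two_le_mul_add_two_sub (hβ : 0 ≤ β) (hr : 1 ≤ r) : 2 ≤ r * β + 2 - β := by
  have : (1 : ℝ) ≤ r := by exact_mod_cast hr
  nlinarith

lemma Real.factorial_mul_Gamma_div_Gamma_pos (hβ0 : 0 ≤ β) (hβ2 : β < 2) (hr : 1 ≤ r) :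
    0 < r.factorial * Gamma (2 - β) / Gamma (r * β + 2 - β) := by
  have := Gamma_pos_of_pos (show 0 < 2 - β by linarith)
  have := Gamma_pos_of_pos (by linarith [two_le_mul_add_two_sub hβ0 hr] : 0 < r * β + 2 - β)
  positivity

lemma Real.factorial_mul_Gamma_div_Gamma_le (hβ0 : 0 ≤ β) (hβ2 : β < 2) (hr : 1 ≤ r) :
    r.factorial * Gamma (2 - β) / Gamma (r * β + 2 - β) ≤ Gamma (2 - β) * (r : ℝ) ^ r := by
  have hA := Gamma_pos_of_pos (show 0 < 2 - β by linarith)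
  calc r.factorial * Gamma (2 - β) / Gamma (r * β + 2 - β)
      ≤ r.factorial * Gamma (2 - β) := by
        refine div_le_self (by positivity) (one_le_Gamma_of_two_le ?_)
        exact two_le_mul_add_two_sub hβ0 hr
    _ ≤ (r : ℝ) ^ r * Gamma (2 - β) := by
        gcongr
        exact_mod_cast r.factorial_le_pow
    _ = Gamma (2 - β) * (r : ℝ) ^ r := mul_comm _ _

end Moments

/-- The moment sequence `η_r = r! Γ(2-β)/Γ(rβ+2-β)` of `M_β(1-V_β)` satisfies the
Carleman condition `∑_k η_{2k}^{-1/(2k)} = ∞` (the series is not summable). -/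
theorem stmt8 (β : ℝ) (hβ0 : 0 ≤ β) (hβ1 : β < 1)
    (η : ℕ → ℝ)
    (hη : ∀ r : ℕ, η r = (r.factorial : ℝ) * Real.Gamma (2 - β) / Real.Gamma (r * β + 2 - β)) :
    ¬ Summable (fun k : ℕ => (η (2 * (k + 1))) ^ (-(1 : ℝ) / (2 * ((k : ℝ) + 1)))) := by
  have hβ2 : β < 2 := by linarith
  refine not_summable_rpow_of_le_mul_pow_self (Gamma_pos_of_pos (s := 2 - β) (by linarith)) ?_ ?_
  · exact fun r hr => hη r ▸ factorial_mul_Gamma_div_Gamma_pos hβ0 hβ2 hr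
  · exact fun r hr => hη r ▸ factorial_mul_Gamma_div_Gamma_le hβ0 hβ2 hr
end

section
/- The moment sequence η_r = r! · Γ(β)² Γ(2−β)² Γ(2β)^r / (Γ(2β−1) Γ(r(2β−1)+3−2β)) (for 1/2 < β < 1) satisfies the Carleman condition Σ_{k=1}^∞ η_{2k}^{−1/(2k)} = ∞, hence determines a unique probability law. -/
/-!
With `q = 2β - 1 ∈ (0, 1)` one has `η_r = C B^r r! / Γ(q r + 2 - q)` with `C, B > 0`.
Bounding `r! ≤ r^r` and `Γ(q r + 2 - q) ≥ n!` with `n ≈ q r`, the superlinear growth of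
`log n!` beats the exponential factor `C (2B)^r`, so `η_r ≤ (r / 2)^r` for large `r`.
Then `η_{2k}^{-1/(2k)} ≥ 1 / k` eventually, and the Carleman series dominates the harmonic one.
-/

open Real Filter
open scoped Nat

theorem eventually_mul_add_le_log_factorial (a b : ℝ) :
    ∀ᶠ n : ℕ in atTop, a * n + b ≤ log n ! := by
  have hlog : Tendsto (fun n : ℕ => log n - (a + 1)) atTop atTop :=
    tendsto_atTop_add_const_right _ _ (tendsto_log_atTop.comp tendsto_natCast_atTop_atTop)
  have h := tendsto_natCast_atTop_atTop.atTop_mul_atTop₀ hlog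
  filter_upwards [h.eventually_ge_atTop b, eventually_ne_atTop 0] with n hn hn0
  have hstirling := Stirling.le_log_factorial_stirling hn0
  have : 0 ≤ log n := log_natCast_nonneg n
  have : 0 ≤ log (2 * π) := log_nonneg (by linarith [two_le_pi])
  nlinarith

theorem Real.factorial_floor_sub_one_le_Gamma {x : ℝ} (hx : 2 ≤ x) :
    ((⌊x⌋₊ - 1) ! : ℝ) ≤ Gamma x := by
  have h2 : (2 : ℝ) ≤ ⌊x⌋₊ := by
    exact_mod_cast Nat.le_floor (show ((2 : ℕ) : ℝ) ≤ x by exact_mod_cast hx)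
  have hcast : ((⌊x⌋₊ - 1 : ℕ) : ℝ) + 1 = ⌊x⌋₊ := by
    rw [Nat.cast_sub (by exact_mod_cast (show (1 : ℝ) ≤ ⌊x⌋₊ by linarith))]; ring
  rw [← Gamma_nat_eq_factorial, hcast]
  exact Gamma_strictMonoOn_Ici.monotoneOn h2 hx (Nat.floor_le (by linarith))

theorem not_summable_rpow_neg_inv_of_le_half_pow (m : ℕ → ℝ)
    (hm : ∀ᶠ r in atTop, 0 < m r ∧ m r ≤ ((r : ℝ) / 2) ^ r) :
    ¬ Summable (fun k : ℕ => m (2 * (k + 1)) ^ (-(1 : ℝ) / (2 * ((k : ℝ) + 1)))) := by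
  intro hsum
  have hr : Tendsto (fun k : ℕ => 2 * (k + 1)) atTop atTop :=
    (tendsto_add_atTop_nat 1).const_mul_atTop' (by norm_num)
  have hbound : ∀ᶠ k : ℕ in atTop,
      ‖1 / ((k : ℝ) + 1)‖ ≤ m (2 * (k + 1)) ^ (-(1 : ℝ) / (2 * ((k : ℝ) + 1))) := by
    filter_upwards [hr.eventually hm] with k ⟨hpos, hle⟩
    have hk : (0 : ℝ) < k + 1 := by positivity
    calc ‖1 / ((k : ℝ) + 1)‖
        = (((k : ℝ) + 1) ^ (2 * (k + 1))) ^ (-(1 : ℝ) / (2 * ((k : ℝ) + 1))) := by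
          rw [← rpow_natCast, ← rpow_mul hk.le, Real.norm_of_nonneg (by positivity)]
          push_cast
          rw [show 2 * ((k : ℝ) + 1) * (-1 / (2 * ((k : ℝ) + 1))) = -1 by field_simp,
            rpow_neg_one, one_div]
      _ ≤ m (2 * (k + 1)) ^ (-(1 : ℝ) / (2 * ((k : ℝ) + 1))) := by
          refine rpow_le_rpow_of_nonpos hpos ?_
            (div_nonpos_of_nonpos_of_nonneg (by norm_num) (by positivity))
          convert hle using 2; push_cast; ring
  have hharmonic := hsum.of_norm_bounded_eventually_nat hbound
  refine not_summable_one_div_natCast ((summable_nat_add_iff 1).1 ?_)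
  simpa using hharmonic

theorem eventually_mul_pow_mul_factorial_div_Gamma_le {q C B : ℝ} (c : ℝ) (hq : 0 < q)
    (hC : 0 < C) (hB : 0 < B) :
    ∀ᶠ r : ℕ in atTop, C * B ^ r * r ! / Gamma (q * r + c) ≤ ((r : ℝ) / 2) ^ r := by
  set L := |log (2 * B)|
  have hlin : Tendsto (fun r : ℕ => q * r + c) atTop atTop :=
    tendsto_atTop_add_const_right _ _ (tendsto_natCast_atTop_atTop.const_mul_atTop hq)
  have hn : Tendsto (fun r : ℕ => ⌊q * r + c⌋₊ - 1) atTop atTop :=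
    (tendsto_sub_atTop_nat 1).comp (tendsto_nat_floor_atTop.comp hlin)
  -- since `q r ≤ n + 2 - c`, the term `r log (2B)` is at most linear in `n`
  filter_upwards [hlin.eventually_ge_atTop 2,
    hn.eventually (eventually_mul_add_le_log_factorial (L / q) (log C + (2 - c) * L / q))]
    with r hx hfact
  set n := ⌊q * r + c⌋₊ - 1
  have hnr : q * r + c - 2 ≤ n := by
    have h1 : 1 ≤ ⌊q * r + c⌋₊ := Nat.le_floor (by push_cast; linarith)
    have := Nat.lt_floor_add_one (q * r + c)
    simp only [n, Nat.cast_sub h1]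
    push_cast
    linarith
  have hlog : log C + r * log (2 * B) ≤ log n ! := by
    have hqr : q * r * L ≤ (n + 2 - c) * L :=
      mul_le_mul_of_nonneg_right (by linarith) (abs_nonneg _)
    calc log C + r * log (2 * B) ≤ log C + r * L := by
          gcongr; exact le_abs_self _
      _ = log C + q * r * L / q := by field_simp
      _ ≤ log C + (n + 2 - c) * L / q := by gcongr
      _ = L / q * n + (log C + (2 - c) * L / q) := by ring
      _ ≤ log n ! := hfact
  have hCB : C * (2 * B) ^ r ≤ n ! := by
    rwa [← log_le_log_iff (by positivity) (by positivity), log_mul hC.ne' (by positivity),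
      log_pow]
  calc C * B ^ r * r ! / Gamma (q * r + c) ≤ C * B ^ r * (r : ℝ) ^ r / n ! := by
        gcongr
        · exact_mod_cast Nat.factorial_le_pow r
        · exact factorial_floor_sub_one_le_Gamma hx
    _ = C * (2 * B) ^ r / n ! * ((r : ℝ) / 2) ^ r := by
        rw [mul_pow, div_pow]; field_simp
    _ ≤ ((r : ℝ) / 2) ^ r :=
        mul_le_of_le_one_left (by positivity) ((div_le_one (by positivity)).2 hCB)

/-- The moment sequence `η_r = r! Γ(β)² Γ(2-β)² Γ(2β)^r / (Γ(2β-1) Γ(r(2β-1)+3-2β))`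
(for `1/2 < β < 1`) satisfies the Carleman condition `∑_k η_{2k}^{-1/(2k)} = ∞`. -/
theorem stmt9 (β : ℝ) (hβ0 : 1 / 2 < β) (hβ1 : β < 1)
    (η : ℕ → ℝ)
    (hη : ∀ r : ℕ, η r = (r.factorial : ℝ) *
      Real.Gamma β ^ 2 * Real.Gamma (2 - β) ^ 2 * Real.Gamma (2 * β) ^ (r : ℕ) /
        (Real.Gamma (2 * β - 1) * Real.Gamma (r * (2 * β - 1) + 3 - 2 * β))) :
    ¬ Summable (fun k : ℕ => (η (2 * (k + 1))) ^ (-(1 : ℝ) / (2 * ((k : ℝ) + 1)))) := by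
  set q := 2 * β - 1
  set C := Gamma β ^ 2 * Gamma (2 - β) ^ 2 / Gamma q
  have hq : 0 < q := by linarith
  have hC : 0 < C := by
    have := Gamma_pos_of_pos (show 0 < β by linarith)
    have := Gamma_pos_of_pos (show 0 < 2 - β by linarith)
    have := Gamma_pos_of_pos hq
    positivity
  have hB : 0 < Gamma (2 * β) := Gamma_pos_of_pos (by linarith)
  have hform : ∀ r : ℕ, η r = C * Gamma (2 * β) ^ r * r ! / Gamma (q * r + (2 - q)) := by
    intro r
    rw [hη r, show (r : ℝ) * (2 * β - 1) + 3 - 2 * β = q * r + (2 - q) by ring]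
    simp only [C]
    field_simp
  apply not_summable_rpow_neg_inv_of_le_half_pow
  filter_upwards [eventually_mul_pow_mul_factorial_div_Gamma_le (2 - q) hq hC hB] with r hr
  have : 0 < Gamma (q * r + (2 - q)) :=
    Gamma_pos_of_pos (by nlinarith [mul_nonneg hq.le r.cast_nonneg])
  rw [hform r]
  exact ⟨by positivity, hr⟩
end

section
/- In the Markov shift setting, for the first entrance time φ(x) = min{n ≥ 1 : x_n = 0} to A = {x_0 = 0}, the identity μ({φ = n}) = P_0(φ ≥ n) holds for every n ≥ 1, where μ = Σ_i π_i P_i. -/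
open MeasureTheory Set Filter
open scoped ENNReal

/-!
Write `T` for the shift and `A = {x₀ = 0}`. Invariance of `π` makes `μ` shift invariant, and
since `Pᵢ` lives on `{x₀ = i}` and `π₀ = 1`, `μ` agrees with `P₀` on subsets of `A`.
As `{φ = n + 1} = T⁻¹({φ = n} \ A)`, shift invariance gives
`μ{φ = n + 1} = μ{φ = n} - μ(A ∩ {φ = n})`; starting from `μ{φ = 1} = μ(T⁻¹A) = μ A`, this
telescopes to `μ{φ = n} = μ(A ∩ {xₖ ≠ 0 for 0 < k < n}) = P₀(φ ≥ n)`, the last step because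
`P₀`-almost every path returns to `0`.
-/

section FirstEntrance

variable {Ω : Type*}

def avoidUpTo (T : Ω → Ω) (A : Set Ω) (n : ℕ) : Set Ω := {x | ∀ k < n, T^[k + 1] x ∉ A}

/-- The points whose first visit to `A` at a positive time happens at time `n + 1`. -/
def firstEntrance (T : Ω → Ω) (A : Set Ω) (n : ℕ) : Set Ω :=
  {x | T^[n + 1] x ∈ A} ∩ avoidUpTo T A n

variable {T : Ω → Ω} {A : Set Ω}

@[simp]
lemma avoidUpTo_zero : avoidUpTo T A 0 = univ := by
  simp [avoidUpTo]

lemma avoidUpTo_succ (n : ℕ) :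
    avoidUpTo T A (n + 1) = avoidUpTo T A n \ {x | T^[n + 1] x ∈ A} := by
  ext x
  simp only [avoidUpTo, Nat.forall_lt_succ_right, mem_ofPred_eq, Set.mem_sdiff]

lemma firstEntrance_zero : firstEntrance T A 0 = T ⁻¹' A := by
  simp [firstEntrance, preimage]

lemma firstEntrance_succ (n : ℕ) :
    firstEntrance T A (n + 1) = T ⁻¹' (firstEntrance T A n \ A) := by
  ext x
  simp only [firstEntrance, avoidUpTo, Nat.forall_lt_succ_left, mem_inter_iff, mem_ofPred_eq,
    mem_preimage, Set.mem_sdiff, Function.iterate_succ_apply, Function.iterate_zero_apply]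
  tauto

variable [MeasurableSpace Ω]

lemma measurableSet_avoidUpTo (hT : Measurable T) (hA : MeasurableSet A) (n : ℕ) :
    MeasurableSet (avoidUpTo T A n) := by
  induction n with
  | zero => simp
  | succ n ih => rw [avoidUpTo_succ]; exact ih.diff ((hT.iterate _) hA)

lemma measurableSet_firstEntrance (hT : Measurable T) (hA : MeasurableSet A) (n : ℕ) :
    MeasurableSet (firstEntrance T A n) :=
  ((hT.iterate _) hA).inter (measurableSet_avoidUpTo hT hA n)

theorem measure_firstEntrance {μ : Measure Ω} (hT : MeasurePreserving T μ μ)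
    (hA : MeasurableSet A) (hμA : μ A ≠ ∞) (n : ℕ) :
    μ (firstEntrance T A n) = μ (A ∩ avoidUpTo T A n) := by
  induction n with
  | zero =>
    rw [firstEntrance_zero, avoidUpTo_zero, inter_univ, hT.measure_preimage hA.nullMeasurableSet]
  | succ n ih =>
    have hE := measurableSet_firstEntrance hT.measurable hA n
    have hEntrance : μ (firstEntrance T A n ∩ A) + μ (firstEntrance T A (n + 1))
        = μ (firstEntrance T A n) := by
      rw [firstEntrance_succ, hT.measure_preimage (hE.diff hA).nullMeasurableSet,
        measure_inter_add_sdiff _ hA]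
    have hAvoid : μ (firstEntrance T A n ∩ A) + μ (A ∩ avoidUpTo T A (n + 1))
        = μ (A ∩ avoidUpTo T A n) := by
      rw [← measure_inter_add_sdiff (A ∩ avoidUpTo T A n) ((hT.measurable.iterate (n + 1)) hA),
        avoidUpTo_succ, firstEntrance, inter_sdiff_assoc]
      congr 2
      ext x
      simp only [mem_inter_iff, mem_ofPred_eq]
      tauto
    have hfin : μ (firstEntrance T A n ∩ A) ≠ ∞ :=
      ne_top_of_le_ne_top hμA (measure_mono inter_subset_right)
    rw [← ENNReal.add_right_inj hfin, hEntrance, hAvoid, ih]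

end FirstEntrance

section SumOfMeasures

variable {ι Ω : Type*} [MeasurableSpace Ω] {P : ι → Measure Ω}

theorem map_sum_smul_eq_of_invariant {T : Ω → Ω} (hT : Measurable T) {p : ι → ι → ℝ≥0∞}
    {π : ι → ℝ≥0∞} (hstep : ∀ i, (P i).map T = Measure.sum fun j => p i j • P j)
    (hπ : ∀ j, π j = ∑' i, π i * p i j) :
    (Measure.sum fun i => π i • P i).map T = Measure.sum fun i => π i • P i := by
  ext S hS
  have hP : ∀ i, P i (T ⁻¹' S) = ∑' j, p i j * P j S := fun i => by
    rw [← Measure.map_apply hT hS, hstep, Measure.sum_apply _ hS]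
    simp only [Measure.smul_apply, smul_eq_mul]
  simp only [Measure.map_apply hT hS, Measure.sum_apply _ hS, Measure.sum_apply _ (hT hS),
    Measure.smul_apply, smul_eq_mul, hP]
  calc ∑' i, π i * ∑' j, p i j * P j S
      = ∑' j, ∑' i, π i * p i j * P j S := by
        simp only [← ENNReal.tsum_mul_left, mul_assoc]
        exact ENNReal.tsum_comm
    _ = ∑' j, π j * P j S := by
        simp only [ENNReal.tsum_mul_right, ← hπ]

theorem sum_smul_apply_of_subset_fiber (π : ι → ℝ≥0∞) {f : Ω → ι}
    (hf : ∀ i, ∀ᵐ x ∂P i, f x = i) {i : ι} {S : Set Ω} (hS : MeasurableSet S)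
    (hSi : S ⊆ f ⁻¹' {i}) :
    Measure.sum (fun j => π j • P j) S = π i * P i S := by
  rw [Measure.sum_apply _ hS]
  refine tsum_eq_single i fun j hj => ?_
  have hnull : P j S = 0 :=
    measure_mono_null (fun x hx (hfx : f x = j) => hj (hfx ▸ hSi hx)) (ae_iff.1 (hf j))
  simp [hnull]

end SumOfMeasures

section SequenceShift

variable {α : Type*}

lemma iterate_shift_apply (k : ℕ) (x : ℕ → α) (m : ℕ) :
    (fun (y : ℕ → α) (n : ℕ) => y (n + 1))^[k] x m = x (m + k) := by
  induction k generalizing x with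
  | zero => rfl
  | succ k ih => rw [Function.iterate_succ_apply, ih, add_assoc, add_comm k]

lemma mem_avoidUpTo_shift_iff {s : Set α} {x : ℕ → α} {n : ℕ} :
    x ∈ avoidUpTo (fun (y : ℕ → α) (n : ℕ) => y (n + 1)) {y | y 0 ∈ s} n ↔
      ∀ k < n, x (k + 1) ∉ s := by
  simp [avoidUpTo, iterate_shift_apply]

lemma succ_le_sInf_visits_iff {s : Set α} {x : ℕ → α} (h : {m | 1 ≤ m ∧ x m ∈ s}.Nonempty)
    (n : ℕ) :
    n + 1 ≤ sInf {m | 1 ≤ m ∧ x m ∈ s} ↔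
      x ∈ avoidUpTo (fun (y : ℕ → α) (n : ℕ) => y (n + 1)) {y | y 0 ∈ s} n := by
  rw [le_csInf_iff'' h, mem_avoidUpTo_shift_iff]
  constructor
  · intro hle k hk hxk
    have := hle (k + 1) ⟨Nat.le_add_left 1 k, hxk⟩
    omega
  · rintro hx m ⟨hm, hxm⟩
    obtain ⟨k, rfl⟩ := Nat.exists_eq_add_of_le' hm
    by_contra! hlt
    exact hx k (by omega) hxm

lemma sInf_visits_eq_succ_iff {s : Set α} {x : ℕ → α} {n : ℕ} :
    sInf {m | 1 ≤ m ∧ x m ∈ s} = n + 1 ↔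
      x ∈ firstEntrance (fun (y : ℕ → α) (n : ℕ) => y (n + 1)) {y | y 0 ∈ s} n := by
  simp only [firstEntrance, mem_inter_iff, mem_ofPred_eq, iterate_shift_apply, zero_add]
  by_cases h : {m | 1 ≤ m ∧ x m ∈ s}.Nonempty
  · constructor
    · intro hn
      have hmem := Nat.sInf_mem h
      rw [hn] at hmem
      exact ⟨hmem.2, (succ_le_sInf_visits_iff h n).1 hn.ge⟩
    · rintro ⟨hx, hav⟩
      exact le_antisymm (Nat.sInf_le ⟨Nat.le_add_left 1 n, hx⟩)
        ((succ_le_sInf_visits_iff h n).2 hav)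
  · rw [Nat.sInf_eq_zero.2 (Or.inr (not_nonempty_iff_eq_empty.1 h))]
    exact iff_of_false (by omega) fun hx => h ⟨n + 1, by omega, hx.1⟩

lemma measurableSet_setOf_frequently_eq [MeasurableSpace α] [MeasurableSingletonClass α] (a : α) :
    MeasurableSet {x : ℕ → α | ∀ m : ℕ, ∃ n : ℕ, m ≤ n ∧ x n = a} :=
  measurableSet_setOfPred.2 <| Measurable.forall fun _ => Measurable.exists fun n =>
    measurable_const.and <| measurableSet_setOfPred.1 <|
      (measurableSet_singleton a).preimage (measurable_pi_apply n)

end SequenceShift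

theorem stmt17_general
    (P : ℤ → Measure (ℕ → ℤ)) (hPprob : ∀ i, IsProbabilityMeasure (P i))
    (π : ℤ → ℝ≥0∞) (hπ0 : π 0 = 1)
    (pm : ℤ → ℤ → ℝ≥0∞)
    (hstart : ∀ i, P i {x | x 0 = i} = 1)
    (hMarkov : ∀ i, (P i).map (fun x n => x (n + 1)) = Measure.sum (fun j => pm i j • P j))
    (hinvariant : ∀ j, π j = ∑' i, π i * pm i j)
    (hrec : ∀ i, P i {x | ∀ m : ℕ, ∃ n : ℕ, m ≤ n ∧ x n = 0} = 1)
    (μ : Measure (ℕ → ℤ)) (hμ : μ = Measure.sum (fun i => π i • P i))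
    (φ : (ℕ → ℤ) → ℕ) (hφ : ∀ x, φ x = sInf {n : ℕ | 1 ≤ n ∧ x n = 0}) :
    ∀ n : ℕ, 1 ≤ n → μ {x | φ x = n} = P 0 {x | n ≤ φ x} := by
  set T : (ℕ → ℤ) → (ℕ → ℤ) := fun x n => x (n + 1)
  set A : Set (ℕ → ℤ) := {y | y 0 ∈ ({0} : Set ℤ)}
  have hT : Measurable T := measurable_pi_lambda _ fun n => measurable_pi_apply (n + 1)
  have hstart_ae (i : ℤ) : ∀ᵐ x ∂P i, x 0 = i :=
    (mem_ae_iff_prob_eq_one (measurableSet_eq_fun (measurable_pi_apply 0) measurable_const)).2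
      (hstart i)
  have hrec_ae := (mem_ae_iff_prob_eq_one (measurableSet_setOf_frequently_eq 0)).2 (hrec 0)
  have hA : MeasurableSet A := measurableSet_eq_fun (measurable_pi_apply 0) measurable_const
  have hμ_of_subset {S : Set (ℕ → ℤ)} (hS : MeasurableSet S) (hSA : S ⊆ A) : μ S = P 0 S := by
    rw [hμ, sum_smul_apply_of_subset_fiber π hstart_ae hS hSA, hπ0, one_mul]
  have hμT : MeasurePreserving T μ μ :=
    ⟨hT, by rw [hμ]; exact map_sum_smul_eq_of_invariant hT hMarkov hinvariant⟩
  have hμA : μ A ≠ ∞ := by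
    rw [hμ_of_subset hA subset_rfl]
    exact measure_ne_top _ _
  intro n hn
  obtain ⟨n, rfl⟩ := Nat.exists_eq_add_of_le' hn
  have hφ_le : ({x | n + 1 ≤ φ x} : Set (ℕ → ℤ)) =ᵐ[P 0] (A ∩ avoidUpTo T A n : Set _) := by
    filter_upwards [hstart_ae 0, hrec_ae] with x hx0 hxrec
    obtain ⟨m, hm, hxm⟩ := hxrec 1
    simp only [eq_iff_iff, hφ]
    exact (succ_le_sInf_visits_iff (s := {0}) ⟨m, hm, hxm⟩ n).trans (and_iff_right hx0).symm
  calc μ {x | φ x = n + 1} = μ (firstEntrance T A n) := by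
        congr 1; ext x; rw [mem_ofPred_eq, hφ]; exact sInf_visits_eq_succ_iff (s := {0})
    _ = μ (A ∩ avoidUpTo T A n) := measure_firstEntrance hμT hA hμA n
    _ = P 0 (A ∩ avoidUpTo T A n) :=
        hμ_of_subset (hA.inter (measurableSet_avoidUpTo hT hA n)) inter_subset_left
    _ = P 0 {x | n + 1 ≤ φ x} := (measure_congr hφ_le).symm

/-- In the null recurrent Markov shift setting, with first entrance time
`φ(x) = min{n ≥ 1 : x_n = 0}` to `A = {x : x₀ = 0}` and `μ = ∑ᵢ πᵢ Pᵢ`, the identity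
`μ({φ = n}) = P₀(φ ≥ n)` holds for every `n ≥ 1`. -/
theorem stmt17
    (P : ℤ → Measure (ℕ → ℤ)) (hPprob : ∀ i, IsProbabilityMeasure (P i))
    (π : ℤ → ℝ≥0∞) (hπpos : ∀ i, 0 < π i) (hπ0 : π 0 = 1)
    (pm : ℤ → ℤ → ℝ≥0∞)
    (hstart : ∀ i, P i {x | x 0 = i} = 1)
    (hMarkov : ∀ i, (P i).map (fun x n => x (n + 1)) = Measure.sum (fun j => pm i j • P j))
    (hinvariant : ∀ j, π j = ∑' i, π i * pm i j)
    (hnullrec : ∑' i, π i = ⊤)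
    (hirred : ∀ i j : ℤ, ∃ n : ℕ, 0 < P i {x | x n = j})
    (hrec : ∀ i, P i {x | ∀ m : ℕ, ∃ n : ℕ, m ≤ n ∧ x n = 0} = 1)
    (μ : Measure (ℕ → ℤ)) (hμ : μ = Measure.sum (fun i => π i • P i))
    (φ : (ℕ → ℤ) → ℕ) (hφ : ∀ x, φ x = sInf {n : ℕ | 1 ≤ n ∧ x n = 0}) :
    ∀ n : ℕ, 1 ≤ n → μ {x | φ x = n} = P 0 {x | n ≤ φ x} :=
  stmt17_general P hPprob π hπ0 pm hstart hMarkov hinvariant hrec μ hμ φ hφ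
end

section
/- Boole's transformation T(x) = x(1−x)/(1 − x − x²) for x ∈ (0,1/2), T(x) = 1 − T(1−x) for x ∈ (1/2,1), preserves the measure μ on (0,1)∖{1/2} with density dμ/dλ(x) = 1/x² + 1/(1−x)², i.e., μ(T⁻¹B) = μ(B) for every Borel set B. -/
/-!
On each half of `E` the map `T` is an increasing bijection onto `(0,1)`: on `(0,1/2)` it is
`f(x) = x(1-x)/(1-x-x²)`, and on `(1/2,1)` it is `1 - f(1-x)`. The identity
`f'(x) = (1/x² + 1/(1-x)²) f(x)²` means that the left branch carries the density of `μ` to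
`1/y²`, and by the symmetry `x ↦ 1-x` of that density the right branch carries it to
`1/(1-y)²`. The two pushed-forward densities add up to the density of `μ` again.
-/

open MeasureTheory Set
open scoped ENNReal

theorem Ioo_union_Ioo_ae_eq_Ioo {α : Type*} [LinearOrder α] [MeasurableSpace α]
    {μ : Measure α} [NullSingletonClass μ] {a b c : α} (hab : a ≤ b) (hbc : b < c) :
    (Ioo a b ∪ Ioo b c : Set α) =ᵐ[μ] Ioo a c := by
  rw [← Ioc_union_Ioo_eq_Ioo hab hbc]
  exact ae_eq_set_union Ioo_ae_eq_Ioc (ae_eq_refl _)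

theorem setLIntegral_Ioo_deriv_mul_comp {a b : ℝ} {f f' : ℝ → ℝ} (hab : a ≤ b)
    (hf : ∀ x ∈ Icc a b, HasDerivAt f (f' x) x) (hf' : ∀ x ∈ Ioo a b, 0 < f' x)
    (g : ℝ → ℝ≥0∞) :
    ∫⁻ x in Ioo a b, ENNReal.ofReal (f' x) * g (f x) = ∫⁻ y in Ioo (f a) (f b), g y := by
  have hcont : ContinuousOn f (Icc a b) := fun x hx =>
    (hf x hx).continuousAt.continuousWithinAt
  have hmono : StrictMonoOn f (Icc a b) :=
    strictMonoOn_of_hasDerivWithinAt_pos (convex_Icc a b) hcont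
      (fun x hx => (hf x (interior_subset hx)).hasDerivWithinAt)
      (fun x hx => hf' x (by rwa [interior_Icc] at hx))
  rw [← hcont.image_Ioo_of_strictMonoOn hab hmono,
    lintegral_image_eq_lintegral_deriv_mul_of_monotoneOn measurableSet_Ioo
      (fun x hx => (hf x (Ioo_subset_Icc_self hx)).hasDerivWithinAt)
      (hmono.monotoneOn.mono Ioo_subset_Icc_self)]

theorem setLIntegral_preimage_inter_Ioo {T f f' : ℝ → ℝ} {a b : ℝ} {B : Set ℝ}
    {w g : ℝ → ℝ≥0∞} (hT : Measurable T) (hB : MeasurableSet B) (hab : a ≤ b)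
    (hf : ∀ x ∈ Icc a b, HasDerivAt f (f' x) x) (hf' : ∀ x ∈ Ioo a b, 0 < f' x)
    (hTf : EqOn T f (Ioo a b)) (hw : ∀ x ∈ Ioo a b, w x = ENNReal.ofReal (f' x) * g (f x)) :
    ∫⁻ x in T ⁻¹' B ∩ Ioo a b, w x = ∫⁻ y in B ∩ Ioo (f a) (f b), g y := by
  rw [← Measure.restrict_restrict (hT hB), ← lintegral_indicator (hT hB),
    ← Measure.restrict_restrict hB, ← lintegral_indicator hB,
    ← setLIntegral_Ioo_deriv_mul_comp hab hf hf']
  refine setLIntegral_congr_fun measurableSet_Ioo fun x hx => ?_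
  by_cases hxB : f x ∈ B
  · simp [hTf hx, hw x hx, hxB]
  · simp [hTf hx, hxB]

noncomputable def booleLeft (x : ℝ) : ℝ := x * (1 - x) / (1 - x - x ^ 2)

noncomputable def booleLeftDeriv (x : ℝ) : ℝ := (1 - 2 * x + 2 * x ^ 2) / (1 - x - x ^ 2) ^ 2

noncomputable def booleDensity (x : ℝ) : ℝ := 1 / x ^ 2 + 1 / (1 - x) ^ 2

theorem hasDerivAt_booleLeft {x : ℝ} (hx : 1 - x - x ^ 2 ≠ 0) :
    HasDerivAt booleLeft (booleLeftDeriv x) x := by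
  have hsub : HasDerivAt (fun y : ℝ => 1 - y) (-1) x := by
    simpa using (hasDerivAt_id' x).const_sub 1
  refine (((hasDerivAt_id' x).mul hsub).div (hsub.sub (hasDerivAt_pow 2 x)) hx).congr_deriv ?_
  simp only [Pi.sub_apply, Pi.mul_apply]
  unfold booleLeftDeriv
  field_simp
  ring

theorem booleLeftDeriv_pos {x : ℝ} (hx : 1 - x - x ^ 2 ≠ 0) : 0 < booleLeftDeriv x := by
  unfold booleLeftDeriv
  have : 0 < 1 - 2 * x + 2 * x ^ 2 := by nlinarith [sq_nonneg (2 * x - 1)]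
  positivity

theorem booleDensity_eq_booleLeftDeriv_mul {x : ℝ} (hx₀ : x ≠ 0) (hx₁ : 1 - x ≠ 0)
    (hx : 1 - x - x ^ 2 ≠ 0) :
    booleDensity x = booleLeftDeriv x * (1 / booleLeft x ^ 2) := by
  unfold booleDensity booleLeftDeriv booleLeft
  field_simp
  ring

theorem booleDensity_one_sub (x : ℝ) : booleDensity (1 - x) = booleDensity x := by
  unfold booleDensity
  rw [sub_sub_cancel, add_comm]

theorem one_sub_sub_sq_pos {x : ℝ} (hx : x ∈ Icc (0 : ℝ) (1 / 2)) : 0 < 1 - x - x ^ 2 := by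
  nlinarith [hx.1, hx.2]

theorem setLIntegral_booleDensity_preimage_inter_left {T : ℝ → ℝ} {B : Set ℝ}
    (hT : Measurable T) (hB : MeasurableSet B) (hTf : EqOn T booleLeft (Ioo 0 (1 / 2))) :
    ∫⁻ x in T ⁻¹' B ∩ Ioo 0 (1 / 2), ENNReal.ofReal (booleDensity x)
      = ∫⁻ y in B ∩ Ioo 0 1, ENNReal.ofReal (1 / y ^ 2) := by
  have hleft : booleLeft 0 = 0 ∧ booleLeft (1 / 2) = 1 := by norm_num [booleLeft]
  rw [setLIntegral_preimage_inter_Ioo hT hB (by norm_num)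
    (fun x hx => hasDerivAt_booleLeft (one_sub_sub_sq_pos hx).ne')
    (fun x hx => booleLeftDeriv_pos (one_sub_sub_sq_pos (Ioo_subset_Icc_self hx)).ne') hTf
    (fun x hx => ?_), hleft.1, hleft.2]
  have hx' := one_sub_sub_sq_pos (Ioo_subset_Icc_self hx)
  rw [← ENNReal.ofReal_mul (booleLeftDeriv_pos hx'.ne').le,
    booleDensity_eq_booleLeftDeriv_mul hx.1.ne' (by linarith [hx.2]) hx'.ne']

theorem setLIntegral_booleDensity_preimage_inter_right {T : ℝ → ℝ} {B : Set ℝ}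
    (hT : Measurable T) (hB : MeasurableSet B)
    (hTf : EqOn T (fun x => 1 - booleLeft (1 - x)) (Ioo (1 / 2) 1)) :
    ∫⁻ x in T ⁻¹' B ∩ Ioo (1 / 2) 1, ENNReal.ofReal (booleDensity x)
      = ∫⁻ y in B ∩ Ioo 0 1, ENNReal.ofReal (1 / (1 - y) ^ 2) := by
  have hright : 1 - booleLeft (1 - 1 / 2) = 0 ∧ 1 - booleLeft (1 - 1) = 1 := by
    norm_num [booleLeft]
  have hmem : ∀ x ∈ Icc (1 / 2 : ℝ) 1, 1 - x ∈ Icc (0 : ℝ) (1 / 2) := fun x hx =>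
    ⟨by linarith [hx.2], by linarith [hx.1]⟩
  rw [setLIntegral_preimage_inter_Ioo (f' := fun x => booleLeftDeriv (1 - x)) hT hB
    (by norm_num) (fun x hx => ?deriv) (fun x hx => ?pos) hTf (fun x hx => ?density),
    hright.1, hright.2]
  case deriv =>
    simpa using ((hasDerivAt_booleLeft (one_sub_sub_sq_pos (hmem x hx)).ne').comp_const_sub
      1 x).const_sub 1
  case pos =>
    exact booleLeftDeriv_pos (one_sub_sub_sq_pos (hmem x (Ioo_subset_Icc_self hx))).ne'
  case density =>
    have hx' := one_sub_sub_sq_pos (hmem x (Ioo_subset_Icc_self hx))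
    rw [← ENNReal.ofReal_mul (booleLeftDeriv_pos hx'.ne').le, sub_sub_cancel,
      ← booleDensity_eq_booleLeftDeriv_mul (by linarith [hx.2]) (by linarith [hx.1]) hx'.ne',
      booleDensity_one_sub]

/-- Boole's transformation `T(x) = x(1-x)/(1-x-x²)` on `(0,1/2)`,
`T(x) = 1 - T(1-x)` on `(1/2,1)`, preserves the measure `μ` with density
`1/x² + 1/(1-x)²` with respect to Lebesgue measure on `E = (0,1/2) ∪ (1/2,1)`. -/
theorem stmt18
    (T : ℝ → ℝ)
    (hTdef : ∀ x : ℝ, T x = if x < 1 / 2 then x * (1 - x) / (1 - x - x ^ 2)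
      else 1 - (1 - x) * x / (x - (1 - x) ^ 2))
    (E : Set ℝ) (hE : E = Set.Ioo (0 : ℝ) (1 / 2) ∪ Set.Ioo (1 / 2 : ℝ) 1)
    (μ : Measure ℝ)
    (hμ : μ = (volume.withDensity
      fun x => ENNReal.ofReal (1 / x ^ 2 + 1 / (1 - x) ^ 2)).restrict E) :
    ∀ B : Set ℝ, MeasurableSet B → μ (T ⁻¹' B) = μ B := by
  intro B hB
  have hT : Measurable T := by
    rw [funext hTdef]
    exact Measurable.ite (measurableSet_lt measurable_id measurable_const) (by fun_prop)
      (by fun_prop)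
  have hTleft : EqOn T booleLeft (Ioo 0 (1 / 2)) := fun x hx => by
    rw [hTdef, if_pos hx.2]
    rfl
  have hTright : EqOn T (fun x => 1 - booleLeft (1 - x)) (Ioo (1 / 2) 1) := fun x hx => by
    rw [hTdef, if_neg (not_lt.2 hx.1.le)]
    unfold booleLeft
    ring_nf
  have hEmeas : MeasurableSet E := hE ▸ measurableSet_Ioo.union measurableSet_Ioo
  have hEae : E =ᵐ[volume] Ioo (0 : ℝ) 1 :=
    hE ▸ Ioo_union_Ioo_ae_eq_Ioo (by norm_num) (by norm_num)
  have hμ_apply : ∀ A, μ A = ∫⁻ x in A ∩ E, ENNReal.ofReal (booleDensity x) := fun A => by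
    rw [hμ, Measure.restrict_apply' hEmeas, withDensity_apply']
    rfl
  rw [hμ_apply, hμ_apply, setLIntegral_congr (ae_eq_set_inter (ae_eq_refl B) hEae), hE,
    inter_union_distrib_left, lintegral_union ((hT hB).inter measurableSet_Ioo)
      (Disjoint.mono inter_subset_right inter_subset_right (Ioo_disjoint_Ioo.2 (by norm_num))),
    setLIntegral_booleDensity_preimage_inter_left hT hB hTleft,
    setLIntegral_booleDensity_preimage_inter_right hT hB hTright,
    ← lintegral_add_left (by fun_prop)]
  refine lintegral_congr fun y => ?_
  rw [booleDensity, ENNReal.ofReal_add (by positivity) (by positivity)]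
end
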